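/- Let A, B be positive definite d×d matrices, with A⁻¹ ⪯ βI and B⁻¹ ⪰ αI for α, β > 0. Then the operator norm of A^{−1/2}(A^{1/2} B A^{1/2})^{1/2} A^{−1/2} is at most √(β/α). -/

import Mathlib

open scoped Matrix.Norms.L2Operator

/-!
Put `M = S⁻¹ T S⁻¹`. Squaring `T` gives the identity `M B⁻¹ M = A⁻¹`, which is the transport
equation `M A M = B` inverted. Conjugating `α ≤ B⁻¹` by the symmetric matrix `M` therefore gives
`α M² ≤ M B⁻¹ M = A⁻¹ ≤ β` in the Loewner order, i.e. `‖M x‖² ≤ (β / α) ‖x‖²` for every `x`.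
-/

namespace Matrix

variable {n : Type*} [Fintype n] [DecidableEq n]

lemma l2_opNorm_le_sqrt_of_posSemidef {M : Matrix n n ℝ} {c : ℝ}
    (h : (c • 1 - Mᴴ * M).PosSemidef) : ‖M‖ ≤ √c := by
  rw [cstar_norm_def]
  refine ContinuousLinearMap.opNorm_le_bound _ (Real.sqrt_nonneg c) fun x => ?_
  have hquad : x.ofLp ⬝ᵥ (Mᴴ * M) *ᵥ x.ofLp ≤ c * (x.ofLp ⬝ᵥ x.ofLp) := by
    simpa [sub_mulVec, smul_mulVec, sub_nonneg] using h.dotProduct_mulVec_nonneg x.ofLp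
  have hadjoint : ContinuousLinearMap.adjoint (toEuclideanCLM (𝕜 := ℝ) M) ∘L
      toEuclideanCLM (𝕜 := ℝ) M = toEuclideanCLM (𝕜 := ℝ) (Mᴴ * M) := by
    rw [map_mul, ← star_eq_conjTranspose, map_star, ContinuousLinearMap.star_eq_adjoint]
    rfl
  have hsq : ‖toEuclideanCLM (𝕜 := ℝ) M x‖ ^ 2 ≤ c * ‖x‖ ^ 2 := by
    rw [ContinuousLinearMap.apply_norm_sq_eq_inner_adjoint_right, hadjoint, RCLike.re_to_real,
      inner_toEuclideanCLM, EuclideanSpace.real_norm_sq_eq]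
    simpa [dotProduct, sq] using hquad
  calc ‖toEuclideanCLM (𝕜 := ℝ) M x‖ = √(‖toEuclideanCLM (𝕜 := ℝ) M x‖ ^ 2) :=
        (Real.sqrt_sq (norm_nonneg _)).symm
    _ ≤ √(c * ‖x‖ ^ 2) := Real.sqrt_le_sqrt hsq
    _ = √c * ‖x‖ := by rw [Real.sqrt_mul' c (sq_nonneg _), Real.sqrt_sq (norm_nonneg _)]

variable {R : Type*} [CommRing R]

lemma isUnit_det_of_mul_self_eq {S T B : Matrix n n R} (hS : IsUnit S.det) (hB : IsUnit B.det)
    (hTB : T * T = S * B * S) : IsUnit T.det := by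
  have hTT : IsUnit (T.det * T.det) := by
    rw [← det_mul, hTB, det_mul, det_mul]
    exact (hS.mul hB).mul hS
  exact isUnit_of_mul_isUnit_left hTT

lemma conj_mul_inv_mul_conj_eq_inv_mul_self {S T B : Matrix n n R} (hS : IsUnit S.det)
    (hB : IsUnit B.det) (hTB : T * T = S * B * S) :
    S⁻¹ * T * S⁻¹ * B⁻¹ * (S⁻¹ * T * S⁻¹) = (S * S)⁻¹ := by
  have hT := isUnit_det_of_mul_self_eq hS hB hTB
  have hTinv : S⁻¹ * B⁻¹ * S⁻¹ = T⁻¹ * T⁻¹ := by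
    rw [← mul_inv_rev T T, hTB, mul_inv_rev, mul_inv_rev, mul_assoc]
  calc S⁻¹ * T * S⁻¹ * B⁻¹ * (S⁻¹ * T * S⁻¹) = S⁻¹ * T * (S⁻¹ * B⁻¹ * S⁻¹) * T * S⁻¹ := by
        simp only [mul_assoc]
    _ = S⁻¹ * (T * T⁻¹) * (T⁻¹ * T) * S⁻¹ := by rw [hTinv]; simp only [mul_assoc]
    _ = (S * S)⁻¹ := by rw [mul_nonsing_inv T hT, nonsing_inv_mul T hT, mul_inv_rev]; simp

end Matrix

open Matrix in
theorem stmt_12_general {d : ℕ} (α β : ℝ) (hα : 0 < α)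
    (A B S T : Matrix (Fin d) (Fin d) ℝ)
    (hB : B.PosDef)
    (hAβ : (β • 1 - A⁻¹).PosSemidef) (hBα : (B⁻¹ - α • 1).PosSemidef)
    (hS : S.PosDef) (hSA : S * S = A)
    (hT : T.PosSemidef) (hTB : T * T = S * B * S) :
    ‖S⁻¹ * T * S⁻¹‖ ≤ Real.sqrt (β / α) := by
  set M := S⁻¹ * T * S⁻¹
  have hMH : Mᴴ = M := by
    rw [conjTranspose_mul, conjTranspose_mul, hS.isHermitian.inv.eq, hT.isHermitian.eq, ← mul_assoc]
  have hMBM : M * B⁻¹ * M = A⁻¹ :=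
    hSA ▸ conj_mul_inv_mul_conj_eq_inv_mul_self hS.det_pos.ne'.isUnit hB.det_pos.ne'.isUnit hTB
  have hconj : (A⁻¹ - α • (M * M)).PosSemidef := by
    have := hBα.conjTranspose_mul_mul_same M
    rwa [hMH, mul_sub, sub_mul, hMBM, mul_smul_comm, mul_one, smul_mul_assoc] at this
  have hloewner : ((β / α) • 1 - Mᴴ * M).PosSemidef := by
    convert (hAβ.add hconj).smul (inv_nonneg.2 hα.le) using 1
    rw [hMH, sub_add_sub_cancel, smul_sub, smul_smul, smul_smul, inv_mul_cancel₀ hα.ne', one_smul,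
      div_eq_inv_mul]
  exact l2_opNorm_le_sqrt_of_posSemidef hloewner

/-- Gaussian case of Caffarelli's contraction theorem: `S` is the principal
square root of `A` and `T` that of `A^{1/2} B A^{1/2}`, so `S⁻¹ * T * S⁻¹` is
the Jacobian of the optimal transport map from `N(0,A)` to `N(0,B)`. -/
theorem stmt_12 {d : ℕ} (α β : ℝ) (hα : 0 < α) (hβ : 0 < β)
    (A B S T : Matrix (Fin d) (Fin d) ℝ)
    (hA : A.PosDef) (hB : B.PosDef)
    (hAβ : (β • 1 - A⁻¹).PosSemidef) (hBα : (B⁻¹ - α • 1).PosSemidef)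
    (hS : S.PosDef) (hSA : S * S = A)
    (hT : T.PosSemidef) (hTB : T * T = S * B * S) :
    ‖S⁻¹ * T * S⁻¹‖ ≤ Real.sqrt (β / α) :=
  stmt_12_general α β hα A B S T hB hAβ hBα hS hSA hT hTB
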